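/- arXiv:1111.1651 — 2 statements merged into one kernel-verified Lean document; each statement's English description precedes it below -/
import Mathlib

section
/- For any set of nodes Q in an imprecise terrain T there exists a single realization R̄ ∈ R_T (the canonical realization) such that WS(R̄,Q) equals the potential watershed PoWS(Q) = ⋃_{R∈R_T} WS(R,Q). -/
/-!
Two realizations `R₁, R₂` can be merged: on `WS(R₁,Q) ∪ WS(R₂,Q)` give each node the lower of
the elevations that put it into one of the watersheds, and `high` elsewhere. Lowering nodes of a
watershed only steepens the descent towards them, so, by induction on the merged elevation and
then along the old flow path, every node of either watershed still drains into `Q`. Since there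
are only finitely many watersheds, one that is maximal for inclusion exists, and it absorbs all
the others.
-/

open scoped Classical
open Set

/-- An imprecise terrain: a finite geometric graph with nodes in the plane,
each node carrying an elevation interval `[low v, high v]`. -/
structure ImpTerrain (V : Type) [Fintype V] [DecidableEq V] where
  pos : V → ℝ × ℝ
  posInj : Function.Injective pos
  adj : V → V → Prop
  adj_symm : ∀ u v, adj u v → adj v u
  adj_irrefl : ∀ v, ¬ adj v v
  low : V → ℝ
  high : V → ℝ

namespace ImpTerrain

variable {V : Type} [Fintype V] [DecidableEq V]

/-- A realization assigns to each node an elevation within its interval. -/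
def IsRealization (T : ImpTerrain V) (R : V → ℝ) : Prop :=
  ∀ v, T.low v ≤ R v ∧ R v ≤ T.high v

/-- Horizontal (plane) distance between two nodes. -/
noncomputable def hdist (T : ImpTerrain V) (u v : V) : ℝ := dist (T.pos u) (T.pos v)

/-- Slope (steepness of descent) of the edge from `p` to `q` in realization `R`. -/
noncomputable def slope (T : ImpTerrain V) (R : V → ℝ) (p q : V) : ℝ :=
  (R p - R q) / T.hdist p q

/-- `q` is a steepest-descent neighbor of `p` in `R`. -/
def SDN (T : ImpTerrain V) (R : V → ℝ) (p q : V) : Prop :=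
  T.adj p q ∧ 0 ≤ T.slope R p q ∧ ∀ r, T.adj p r → T.slope R p r ≤ T.slope R p q

/-- The neighborhood of a set of nodes. -/
def Nbhd (T : ImpTerrain V) (P : Set V) : Set V :=
  {s | s ∉ P ∧ ∃ t ∈ P, T.adj s t}

/-- `u` and `v` are connected by a path staying inside `P`. -/
def ConnIn (T : ImpTerrain V) (P : Set V) (u v : V) : Prop :=
  Relation.ReflTransGen (fun a b => T.adj a b ∧ a ∈ P ∧ b ∈ P) u v

/-- `P` is a local minimum in realization `R`: nonempty, connected, all nodes at
the same elevation, strictly below its neighborhood. -/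
def LocalMin (T : ImpTerrain V) (R : V → ℝ) (P : Set V) : Prop :=
  P.Nonempty ∧ (∀ u ∈ P, ∀ v ∈ P, T.ConnIn P u v) ∧
    (∀ u ∈ P, ∀ v ∈ P, R u = R v) ∧ (∀ u ∈ P, ∀ t ∈ T.Nbhd P, R u < R t)

def InLocalMin (T : ImpTerrain V) (R : V → ℝ) (p : V) : Prop :=
  ∃ P, T.LocalMin R P ∧ p ∈ P

/-- One step of discrete water flow. -/
def FlowStep (T : ImpTerrain V) (R : V → ℝ) (p q : V) : Prop :=
  (∃ P, T.LocalMin R P ∧ p ∈ P ∧ q ∈ P ∧ T.adj p q) ∨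
    (¬ T.InLocalMin R p ∧ T.SDN R p q)

/-- `p ⇝_R q` : water from `p` reaches `q` in realization `R`. -/
def FlowsTo (T : ImpTerrain V) (R : V → ℝ) : V → V → Prop :=
  Relation.ReflTransGen (T.FlowStep R)

/-- The (discrete) watershed of a set of nodes `Q` in realization `R`. -/
def WS (T : ImpTerrain V) (R : V → ℝ) (Q : Set V) : Set V :=
  {p | ∃ q ∈ Q, T.FlowsTo R p q}

/-- The potential watershed of `Q`. -/
def PoWS (T : ImpTerrain V) (Q : Set V) : Set V :=
  {p | ∃ R, T.IsRealization R ∧ p ∈ T.WS R Q}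

/-- A flow path: a simple path following steepest-descent edges that ends in,
and visits all nodes of, a local minimum. -/
def IsFlowPath (T : ImpTerrain V) (R : V → ℝ) (L : List V) : Prop :=
  L.Nodup ∧ L.Chain' (fun p q => T.SDN R p q) ∧
    ∃ P, T.LocalMin R P ∧ (∀ v ∈ P, v ∈ L) ∧ ∃ hne : L ≠ [], L.getLast hne ∈ P

/-- The `Q`-avoiding potential watershed of `S`: nodes having, in some
realization, a flow path to a node of `S` whose portion up to that node
avoids `Q`. -/
def AvWS (T : ImpTerrain V) (Q S : Set V) : Set V :=
  {p | ∃ R, T.IsRealization R ∧ ∃ L, T.IsFlowPath R L ∧ ∃ s ∈ S,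
    ∃ i j : Fin L.length, (i : ℕ) ≤ (j : ℕ) ∧ L.get i = p ∧ L.get j = s ∧
      ∀ k : Fin L.length, (i : ℕ) ≤ (k : ℕ) → (k : ℕ) ≤ (j : ℕ) → L.get k ∉ Q}

/-- The persistent watershed of `Q`. -/
def PsWS (T : ImpTerrain V) (Q : Set V) : Set V :=
  (T.AvWS Q (T.PoWS Q)ᶜ)ᶜ

/-- The core watershed of `Q`: nodes from which every induced flow path leads
to a node of `Q`. -/
def CoWS (T : ImpTerrain V) (Q : Set V) : Set V :=
  {p | ∀ R, T.IsRealization R → ∀ L, T.IsFlowPath R L →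
    ∀ i : Fin L.length, L.get i = p →
      ∃ q ∈ Q, ∃ j : Fin L.length, (i : ℕ) ≤ (j : ℕ) ∧ L.get j = q}

/-- Union of all node sets disjoint from `Q` that form a local minimum in some
realization. -/
def Vmin (T : ImpTerrain V) (Q : Set V) : Set V :=
  ⋃₀ {r | r ∩ Q = ∅ ∧ ∃ R, T.IsRealization R ∧ T.LocalMin R r}

/-- `S` contains a local minimum in every realization. -/
def AlwaysMin (T : ImpTerrain V) (S : Set V) : Prop :=
  ∀ R, T.IsRealization R → ∃ P, T.LocalMin R P ∧ P ⊆ S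

/-- An imprecise minimum: a minimal set containing a local minimum in every
realization. -/
def ImpreciseMin (T : ImpTerrain V) (S : Set V) : Prop :=
  T.AlwaysMin S ∧ ∀ S', S' ⊂ S → ¬ T.AlwaysMin S'

/-- A terrain is regular if every local minimum of the lowermost realization is
an imprecise minimum. -/
def Regular (T : ImpTerrain V) : Prop :=
  ∀ P, T.LocalMin T.low P → T.ImpreciseMin P

/-- A proxy of `S`: a node of `S` from which water can never reach a node
outside `S` in any realization. -/
def IsProxy (T : ImpTerrain V) (S : Set V) (p : V) : Prop :=
  p ∈ S ∧ ∀ R, T.IsRealization R → ∀ q, q ∉ S → ¬ T.FlowsTo R p q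

/-- `R'` is an `ε`-perturbation of `R`. -/
def Perturb (ε : ℝ) (R R' : V → ℝ) : Prop := ∀ v, |R' v - R v| ≤ ε

/-- `S` together with all `ε`-perturbations of its members (`S^ε`). -/
def Enlarge (S : Set (V → ℝ)) (ε : ℝ) : Set (V → ℝ) :=
  S ∪ {R' | ∃ R ∈ S, Perturb ε R R'}

/-- `Π(S)` : flow paths induced by realizations in `S`. -/
def FlowPathsOf (T : ImpTerrain V) (S : Set (V → ℝ)) : Set (List V) :=
  {L | ∃ R ∈ S, T.IsFlowPath R L}

/-- A flow path is stable with respect to `S`. -/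
def StableWrt (T : ImpTerrain V) (S : Set (V → ℝ)) (L : List V) : Prop :=
  ∃ ε > (0 : ℝ), ∃ R ∈ S, ∀ R', Perturb ε R R' → T.IsFlowPath R' L

/-- State of the sweep-plane minimum-removal algorithm. -/
structure SweepState (V : Type) where
  discovered : Set V
  final : V → Option ℝ
  proxies : Set V

def pendingS (st : SweepState V) (v : V) : Prop :=
  v ∈ st.discovered ∧ st.final v = none

/-- Pending component of `v`. -/
def pendComp (T : ImpTerrain V) (st : SweepState V) (v : V) : Set V :=
  {u | Relation.ReflTransGen (fun a b => T.adj a b ∧ pendingS st a ∧ pendingS st b) v u}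

/-- One step of the sweep algorithm, processing a `low` event `(v, false)` or a
`high` event `(v, true)`. -/
noncomputable def sweepStep (T : ImpTerrain V) (st : SweepState V) : V × Bool → SweepState V
  | (v, false) =>
    let st1 : SweepState V := ⟨insert v st.discovered, st.final, st.proxies⟩
    if ∃ u, T.adj v u ∧ (st.final u).isSome = true then
      ⟨st1.discovered,
        fun w => if w ∈ T.pendComp st1 v then some (T.low v) else st.final w,
        st.proxies⟩
    else st1
  | (v, true) =>
    if (st.final v).isSome = true then st
    else
      ⟨st.discovered,
        fun w =>
          if w ∈ T.pendComp st v then some (sSup (T.low '' T.pendComp st v))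
          else st.final w,
        insert v st.proxies⟩

noncomputable def sweepRun (T : ImpTerrain V) (evs : List (V × Bool)) : SweepState V :=
  evs.foldl T.sweepStep ⟨∅, fun _ => none, ∅⟩

/-- Elevation key of an event. -/
def eKey (T : ImpTerrain V) : V × Bool → ℝ
  | (v, false) => T.low v
  | (v, true) => T.high v

/-- A valid event list: all events, each once, sorted by elevation with low
events before high events at equal elevation. -/
def ValidEventList (T : ImpTerrain V) (evs : List (V × Bool)) : Prop :=
  (∀ v : V, ∀ b : Bool, (v, b) ∈ evs) ∧ evs.Nodup ∧
    evs.Pairwise (fun e1 e2 =>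
      T.eKey e1 < T.eKey e2 ∨ (T.eKey e1 = T.eKey e2 ∧ ¬(e1.2 = true ∧ e2.2 = false)))

/-- The realization `M` computed by the sweep algorithm. -/
noncomputable def sweepM (T : ImpTerrain V) (evs : List (V × Bool)) : V → ℝ :=
  fun v => ((T.sweepRun evs).final v).getD (T.high v)

end ImpTerrain

namespace ImpTerrain

variable {V : Type} [Fintype V] [DecidableEq V] {T : ImpTerrain V} {R R' : V → ℝ} {u v : V}

lemma ne_of_adj (h : T.adj u v) : u ≠ v := by
  rintro rfl
  exact T.adj_irrefl u h

lemma hdist_pos (h : T.adj u v) : 0 < T.hdist u v :=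
  dist_pos.2 fun he => ne_of_adj h (T.posInj he)

lemma slope_nonneg_iff (h : T.adj u v) : 0 ≤ T.slope R u v ↔ R v ≤ R u := by
  rw [slope, le_div_iff₀ (hdist_pos h), zero_mul, sub_nonneg]

lemma slope_pos_iff (h : T.adj u v) : 0 < T.slope R u v ↔ R v < R u := by
  rw [slope, lt_div_iff₀ (hdist_pos h), zero_mul, sub_pos]

lemma slope_le_slope_iff (h : T.adj u v) :
    T.slope R u v ≤ T.slope R' u v ↔ R u - R v ≤ R' u - R' v :=
  div_le_div_iff_of_pos_right (hdist_pos h)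

lemma slope_lt_slope_iff (h : T.adj u v) :
    T.slope R u v < T.slope R' u v ↔ R u - R v < R' u - R' v :=
  div_lt_div_iff_of_pos_right (hdist_pos h)

lemma SDN.le (h : T.SDN R u v) : R v ≤ R u :=
  (slope_nonneg_iff h.1).1 h.2.1

/-- A local minimum lies strictly below its neighbourhood, so a descent edge leaving it stays
inside it. -/
lemma SDN.flowStep (h : T.SDN R u v) : T.FlowStep R u v := by
  by_cases hmin : T.InLocalMin R u
  · obtain ⟨P, hP, huP⟩ := hmin
    refine .inl ⟨P, hP, huP, ?_, h.1⟩
    by_contra hvP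
    exact (hP.2.2.2 u huP v ⟨hvP, u, huP, T.adj_symm u v h.1⟩).not_ge h.le
  · exact .inr ⟨hmin, h⟩

lemma FlowStep.sdn (h : T.FlowStep R u v) : T.SDN R u v := by
  rcases h with ⟨P, hP, huP, hvP, hadj⟩ | ⟨-, h⟩
  · have hflat : ∀ r, T.adj u r → T.slope R u r ≤ 0 := by
      intro r hr
      by_cases hrP : r ∈ P
      · rw [slope, hP.2.2.1 u huP r hrP, sub_self, zero_div]
      · have hlt := hP.2.2.2 u huP r ⟨hrP, u, huP, T.adj_symm u r hr⟩
        exact div_nonpos_of_nonpos_of_nonneg (by linarith) (hdist_pos hr).le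
    have hzero : T.slope R u v = 0 := by rw [slope, hP.2.2.1 u huP v hvP, sub_self, zero_div]
    exact ⟨hadj, hzero.ge, fun r hr => hzero ▸ hflat r hr⟩
  · exact h

lemma exists_sdn_of_slope_nonneg (h : T.adj u v) (h0 : 0 ≤ T.slope R u v) :
    ∃ y, T.SDN R u y ∧ T.slope R u v ≤ T.slope R u y := by
  obtain ⟨y, hy, hmax⟩ := Finset.exists_max_image {r | T.adj u r} (T.slope R u)
    ⟨v, by simpa using h⟩
  simp only [Finset.mem_filter, Finset.mem_univ, true_and] at hy hmax
  have hvy := hmax v h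
  exact ⟨y, ⟨hy, h0.trans hvy, hmax⟩, hvy⟩

/-- The edge `uv` only gets steeper, so an edge that overtakes it must lead to a node lowered
even more. -/
lemma SDN.exists_sdn_of_le (hs : T.SDN R u v) (hu : R' u = R u) (hv : R' v ≤ R v) :
    ∃ y, T.SDN R' u y ∧ (y = v ∨ (R' y < R' u ∧ R' y < R y)) := by
  have hsteeper : T.slope R u v ≤ T.slope R' u v := by
    rw [slope_le_slope_iff hs.1, hu]
    linarith
  obtain ⟨y, hy, hvy⟩ := exists_sdn_of_slope_nonneg hs.1 (hs.2.1.trans hsteeper)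
  by_cases hyv : T.slope R' u y ≤ T.slope R' u v
  · exact ⟨v, ⟨hs.1, hs.2.1.trans hsteeper, fun r hr => (hy.2.2 r hr).trans hyv⟩, .inl rfl⟩
  · replace hyv := not_le.1 hyv
    have hlower : T.slope R u y < T.slope R' u y :=
      ((hs.2.2 y hy.1).trans hsteeper).trans_lt hyv
    rw [slope_lt_slope_iff hy.1, hu] at hlower
    exact ⟨y, hy, .inr ⟨(slope_pos_iff hy.1).1 (hs.2.1.trans hsteeper |>.trans_lt hyv),
      by linarith⟩⟩

lemma mem_WS_of_flowStep {Q : Set V} (h : T.FlowStep R u v) (hv : v ∈ T.WS R Q) :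
    u ∈ T.WS R Q :=
  let ⟨q, hq, hvq⟩ := hv
  ⟨q, hq, .head h hvq⟩

theorem WS_subset_WS_of_forall_le {ι : Type*} {Q : Set V} {R : ι → V → ℝ}
    (hle : ∀ i, ∀ v ∈ T.WS (R i) Q, R' v ≤ R i v)
    (hlt : ∀ i v, R' v < R i v → ∃ j, v ∈ T.WS (R j) Q ∧ R' v = R j v) (i : ι) :
    T.WS (R i) Q ⊆ T.WS R' Q := by
  suffices key : ∀ u, (∃ j, u ∈ T.WS (R j) Q ∧ R' u = R j u) → u ∈ T.WS R' Q by
    intro u hu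
    rcases (hle i u hu).lt_or_eq with h | h
    · exact key u (hlt i u h)
    · exact key u ⟨i, hu, h⟩
  intro u
  induction u using (Finite.wellFounded_of_trans_of_irrefl (InvImage (· < ·) R')).induction with
  | _ u IH =>
  rintro ⟨j, ⟨q, hq, hflow⟩, hu⟩
  suffices ∀ v, T.FlowsTo (R j) v q → R' v ≤ R' u → R' v = R j v → v ∈ T.WS R' Q from
    this u hflow le_rfl hu
  intro v hv
  induction hv using Relation.ReflTransGen.head_induction_on with
  | refl => exact fun _ _ => ⟨q, hq, .refl⟩
  | @head v w hstep hrest ih =>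
    intro hvu hv
    have hs := hstep.sdn
    obtain ⟨y, hy, hyw | ⟨hyv, hylt⟩⟩ := hs.exists_sdn_of_le hv (hle j w ⟨q, hq, hrest⟩)
    · subst hyw
      refine mem_WS_of_flowStep hy.flowStep ?_
      rcases (hle j y ⟨q, hq, hrest⟩).lt_or_eq with hylt | hyeq
      · exact IH y (by show R' y < R' u; linarith [hs.le]) (hlt j y hylt)
      · exact ih (hy.le.trans hvu) hyeq
    · exact mem_WS_of_flowStep hy.flowStep (IH y (hyv.trans_le hvu) (hlt j y hylt))

noncomputable def mergeWS (T : ImpTerrain V) (Q : Set V) (R₁ R₂ : V → ℝ) : V → ℝ := fun v =>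
  if v ∈ T.WS R₁ Q then
    if v ∈ T.WS R₂ Q then min (R₁ v) (R₂ v) else R₁ v
  else if v ∈ T.WS R₂ Q then R₂ v else T.high v

variable {Q : Set V} {R₁ R₂ : V → ℝ}

lemma isRealization_mergeWS (hle : ∀ v, T.low v ≤ T.high v) (h₁ : T.IsRealization R₁)
    (h₂ : T.IsRealization R₂) : T.IsRealization (T.mergeWS Q R₁ R₂) := by
  intro v
  unfold mergeWS
  split_ifs
  · exact ⟨le_min (h₁ v).1 (h₂ v).1, (min_le_left _ _).trans (h₁ v).2⟩
  · exact h₁ v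
  · exact h₂ v
  · exact ⟨hle v, le_rfl⟩

lemma WS_union_subset_WS_mergeWS (h₁ : T.IsRealization R₁) (h₂ : T.IsRealization R₂) :
    T.WS R₁ Q ∪ T.WS R₂ Q ⊆ T.WS (T.mergeWS Q R₁ R₂) Q := by
  have hle : ∀ i, ∀ v ∈ T.WS (![R₁, R₂] i) Q, T.mergeWS Q R₁ R₂ v ≤ ![R₁, R₂] i v := by
    refine Fin.forall_fin_two.2 ⟨fun v hv => ?_, fun v hv => ?_⟩ <;>
      simp only [mergeWS, Matrix.cons_val_zero, Matrix.cons_val_one] at hv ⊢ <;>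
      split_ifs <;> simp_all
  have hlt : ∀ i v, T.mergeWS Q R₁ R₂ v < ![R₁, R₂] i v →
      ∃ j, v ∈ T.WS (![R₁, R₂] j) Q ∧ T.mergeWS Q R₁ R₂ v = ![R₁, R₂] j v := by
    intro i v hv
    unfold mergeWS at hv ⊢
    split_ifs at hv ⊢ with hv₁ hv₂ hv₂
    · rcases min_choice (R₁ v) (R₂ v) with h | h
      · exact ⟨0, hv₁, h⟩
      · exact ⟨1, hv₂, h⟩
    · exact ⟨0, hv₁, rfl⟩
    · exact ⟨1, hv₂, rfl⟩
    · have hhigh : ∀ i, ![R₁, R₂] i v ≤ T.high v := Fin.forall_fin_two.2 ⟨(h₁ v).2, (h₂ v).2⟩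
      exact absurd hv (hhigh i).not_gt
  rintro v (hv | hv)
  · exact WS_subset_WS_of_forall_le hle hlt 0 hv
  · exact WS_subset_WS_of_forall_le hle hlt 1 hv

end ImpTerrain

/-- For any set of nodes `Q` there is a single (canonical) realization whose
watershed of `Q` equals the potential watershed of `Q`. -/
theorem stmt1 {V : Type} [Fintype V] [DecidableEq V] (T : ImpTerrain V)
    (hle : ∀ v, T.low v ≤ T.high v) (Q : Set V) :
    ∃ Rbar, T.IsRealization Rbar ∧ T.WS Rbar Q = T.PoWS Q := by
  obtain ⟨Rbar, hRbar, hmax⟩ := Set.Finite.exists_maximalFor' (fun R => T.WS R Q)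
    {R | T.IsRealization R} (Set.toFinite _) ⟨T.low, fun v => ⟨le_rfl, hle v⟩⟩
  refine ⟨Rbar, hRbar, subset_antisymm (fun p hp => ⟨Rbar, hRbar, hp⟩) ?_⟩
  rintro p ⟨R, hR, hp⟩
  have hmerge := T.WS_union_subset_WS_mergeWS (Q := Q) hRbar hR
  exact hmax (ImpTerrain.isRealization_mergeWS hle hRbar hR) (subset_union_left.trans hmerge)
    (hmerge (Or.inr hp))
end

section
/- Every imprecise minimum S of an imprecise terrain contains a proxy, that is, a node p ∈ S such that there exist no realization R and node q ∉ S with p ⇝_R q. In fact, any node s ∈ S with high(s) < min_{t∈N(S)} low(t) is a proxy. -/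
open scoped Classical
open Set

/-! A node `v` whose `high` lies strictly below `low` on all of `N(S)` is a proxy, because
water never climbs. To find one, say that `v` escapes `S` at level `c` if some path from `v`
through nodes with `low ≤ c` leaves `S`. If every node escaped at its `high`, then the
realization lifting each node to its least escape level would have no local minimum in `S`:
from any node of `S` an escape path runs out of `S` without climbing. So some `v` does not
escape at `high v`. The nodes reached from `v` through `low ≤ high v` form a set `A ⊆ S`
whose neighbours all have `low > high v`; such a set contains a local minimum in every
realization (the level component of a lowest node of `A`), so minimality of `S` forces
`A = S`. -/

namespace ImpTerrain

variable {V : Type} [Fintype V] [DecidableEq V] {T : ImpTerrain V}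

theorem hdist_pos_s3 {p q : V} (h : T.adj p q) : 0 < T.hdist p q :=
  dist_pos.mpr fun he => T.adj_irrefl p (T.posInj he ▸ h)

theorem FlowStep.adj {R : V → ℝ} {p q : V} (h : T.FlowStep R p q) : T.adj p q := by
  rcases h with ⟨-, -, -, -, hpq⟩ | ⟨-, hpq, -⟩ <;> exact hpq

theorem FlowStep.apply_le {R : V → ℝ} {p q : V} (h : T.FlowStep R p q) : R q ≤ R p := by
  rcases h with ⟨P, hP, hp, hq, -⟩ | ⟨-, hpq, hslope, -⟩
  · exact (hP.2.2.1 q hq p hp).le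
  · have := (le_div_iff₀ (hdist_pos_s3 hpq)).mp hslope
    linarith

theorem isProxy_of_high_lt_low_nbhd {S : Set V} {s : V} (hs : s ∈ S)
    (hN : ∀ t ∈ T.Nbhd S, T.high s < T.low t) : T.IsProxy S s := by
  refine ⟨hs, fun R hR q hq hflow => hq ?_⟩
  suffices ∀ x, T.FlowsTo R s x → x ∈ S ∧ R x ≤ T.high s from (this q hflow).1
  intro x hx
  induction hx with
  | refl => exact ⟨hs, (hR s).2⟩
  | @tail b c _ hbc ih =>
    have hbc : T.FlowStep R b c := hbc
    refine ⟨?_, hbc.apply_le.trans ih.2⟩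
    by_contra hcS
    have := hN c ⟨hcS, b, ih.1, T.adj_symm b c hbc.adj⟩
    linarith [(hR c).1, hbc.apply_le]

theorem ConnIn.symm {P : Set V} {u v : V} (h : T.ConnIn P u v) : T.ConnIn P v u :=
  have : Std.Symm fun a b => T.adj a b ∧ a ∈ P ∧ b ∈ P :=
    ⟨fun a b hab => ⟨T.adj_symm a b hab.1, hab.2.2, hab.2.1⟩⟩
  Std.Symm.symm (r := Relation.ReflTransGen _) _ _ h

theorem LocalMin.mem_of_adj_of_le {R : V → ℝ} {Q : Set V} (hQ : T.LocalMin R Q) {a c : V}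
    (ha : a ∈ Q) (hac : T.adj a c) (hca : R c ≤ R a) : c ∈ Q := by
  by_contra hc
  exact (hQ.2.2.2 a ha c ⟨hc, a, ha, T.adj_symm a c hac⟩).not_ge hca

theorem exists_localMin_subset_of_lt_nbhd (R : V → ℝ) {A : Set V} {m : V} (hm : m ∈ A)
    (hmin : ∀ a ∈ A, R m ≤ R a) (hN : ∀ t ∈ T.Nbhd A, R m < R t) :
    ∃ P, T.LocalMin R P ∧ P ⊆ A := by
  set C : Set V := {x | Relation.ReflTransGen (fun a b => T.adj a b ∧ b ∈ A ∧ R b = R m) m x}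
  have hmC : m ∈ C := Relation.ReflTransGen.refl
  have hC : ∀ x ∈ C, x ∈ A ∧ R x = R m := by
    intro x hx
    induction hx with
    | refl => exact ⟨hm, rfl⟩
    | tail _ hbc _ => exact hbc.2
  have hconn : ∀ x ∈ C, T.ConnIn C m x := by
    intro x hx
    induction hx with
    | refl => exact Relation.ReflTransGen.refl
    | @tail b c hb hbc ih => exact ih.tail ⟨hbc.1, hb, hb.tail hbc⟩
  refine ⟨C, ⟨⟨m, hmC⟩, fun x hx y hy => (hconn x hx).symm.trans (hconn y hy),
    fun x hx y hy => (hC x hx).2.trans (hC y hy).2.symm, ?_⟩, fun x hx => (hC x hx).1⟩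
  rintro x hx t ⟨htC, y, hy, hty⟩
  rw [(hC x hx).2]
  by_cases htA : t ∈ A
  · refine (hmin t htA).lt_of_ne fun heq => htC ?_
    exact Relation.ReflTransGen.tail hy ⟨T.adj_symm t y hty, htA, heq.symm⟩
  · exact hN t ⟨htA, y, (hC y hy).1, hty⟩

theorem alwaysMin_of_high_lt_low_nbhd {A : Set V} {v : V} (hv : v ∈ A)
    (hN : ∀ t ∈ T.Nbhd A, T.high v < T.low t) : T.AlwaysMin A := by
  intro R hR
  obtain ⟨m, hm, hmin⟩ := A.exists_min_image R A.toFinite ⟨v, hv⟩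
  refine exists_localMin_subset_of_lt_nbhd R hm hmin fun t ht => ?_
  calc R m ≤ R v := hmin v hv
    _ ≤ T.high v := (hR v).2
    _ < T.low t := hN t ht
    _ ≤ R t := (hR t).1

variable (T) in
def ReachLE (c : ℝ) : V → V → Prop :=
  Relation.ReflTransGen fun a b => T.adj a b ∧ T.low b ≤ c

variable (T) in
def EscapesAt (S : Set V) (c : ℝ) (v : V) : Prop :=
  ∃ u ∉ S, T.ReachLE c v u

variable (T) in
/-- Whether `v` escapes at level `c` depends only on which `low` values are `≤ c`, so the
least escape level can be sought among the values of `low`. -/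
noncomputable def escapeLevels (S : Set V) (v : V) : Finset ℝ :=
  (Finset.univ.image T.low).filter fun c => T.low v ≤ c ∧ T.EscapesAt S c v

variable (T) in
noncomputable def escapeLevel (S : Set V) (v : V) : ℝ :=
  if h : (T.escapeLevels S v).Nonempty then (T.escapeLevels S v).min' h else T.low v

theorem EscapesAt.exists_mem_escapeLevels {S : Set V} {c : ℝ} {v : V} (hv : T.low v ≤ c)
    (h : T.EscapesAt S c v) : ∃ c' ∈ T.escapeLevels S v, c' ≤ c := by
  obtain ⟨u, hu, hvu⟩ := h
  set below := (Finset.univ.image T.low).filter (· ≤ c)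
  have hne : below.Nonempty := ⟨T.low v, by simp [below, hv]⟩
  have hbelow : ∀ x, T.low x ≤ c → T.low x ≤ below.max' hne := fun x hx =>
    below.le_max' _ (by simp [below, hx])
  obtain ⟨hmax_mem, hmax_le⟩ := Finset.mem_filter.mp (below.max'_mem hne)
  refine ⟨below.max' hne, Finset.mem_filter.mpr ⟨hmax_mem, hbelow v hv, u, hu, ?_⟩, hmax_le⟩
  exact Relation.ReflTransGen.mono (fun a b hab => ⟨hab.1, hbelow b hab.2⟩) _ _ hvu

theorem low_le_escapeLevel (S : Set V) (v : V) : T.low v ≤ T.escapeLevel S v := by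
  unfold escapeLevel
  split_ifs with h
  · exact (Finset.mem_filter.mp ((T.escapeLevels S v).min'_mem h)).2.1
  · exact le_rfl

theorem escapeLevel_le {S : Set V} {c : ℝ} {v : V} (hv : T.low v ≤ c)
    (h : T.EscapesAt S c v) : T.escapeLevel S v ≤ c := by
  obtain ⟨c', hc', hc'c⟩ := h.exists_mem_escapeLevels hv
  rw [escapeLevel, dif_pos ⟨c', hc'⟩]
  exact ((T.escapeLevels S v).min'_le c' hc').trans hc'c

theorem escapesAt_escapeLevel {S : Set V} {c : ℝ} {v : V} (hv : T.low v ≤ c)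
    (h : T.EscapesAt S c v) : T.EscapesAt S (T.escapeLevel S v) v := by
  obtain ⟨c', hc', -⟩ := h.exists_mem_escapeLevels hv
  rw [escapeLevel, dif_pos ⟨c', hc'⟩]
  exact (Finset.mem_filter.mp ((T.escapeLevels S v).min'_mem ⟨c', hc'⟩)).2.2

theorem not_alwaysMin_of_forall_escapesAt (hle : ∀ v, T.low v ≤ T.high v) {S : Set V}
    (h : ∀ v, T.EscapesAt S (T.high v) v) : ¬ T.AlwaysMin S := by
  intro hS
  obtain ⟨Q, hQ, hQS⟩ := hS (T.escapeLevel S) fun v =>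
    ⟨low_le_escapeLevel S v, escapeLevel_le (hle v) (h v)⟩
  obtain ⟨v, hv⟩ := hQ.1
  obtain ⟨u, hu, hvu⟩ := escapesAt_escapeLevel (hle v) (h v)
  suffices ∀ a, T.ReachLE (T.escapeLevel S v) a u → a ∈ Q → False from this v hvu hv
  intro a ha
  induction ha using Relation.ReflTransGen.head_induction_on with
  | refl => exact fun huQ => hu (hQS huQ)
  | @head a c hac hcu ih =>
    intro haQ
    refine ih (hQ.mem_of_adj_of_le haQ hac.1 ?_)
    rw [hQ.2.2.1 a haQ v hv]
    exact escapeLevel_le hac.2 ⟨u, hu, hcu⟩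

theorem lt_low_of_mem_nbhd_reachLE {c : ℝ} {v t : V}
    (ht : t ∈ T.Nbhd {u | T.ReachLE c v u}) : c < T.low t := by
  obtain ⟨htA, s, hs, hts⟩ := ht
  by_contra! htc
  exact htA (Relation.ReflTransGen.tail hs ⟨T.adj_symm t s hts, htc⟩)

theorem ImpreciseMin.exists_high_lt_low_nbhd (hle : ∀ v, T.low v ≤ T.high v) {S : Set V}
    (hS : T.ImpreciseMin S) : ∃ v ∈ S, ∀ t ∈ T.Nbhd S, T.high v < T.low t := by
  obtain ⟨v, hv⟩ : ∃ v, ¬ T.EscapesAt S (T.high v) v := by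
    by_contra! h
    exact not_alwaysMin_of_forall_escapesAt hle h hS.1
  set A := {u | T.ReachLE (T.high v) v u}
  have hAS : A ⊆ S := fun u hvu => by
    by_contra hu
    exact hv ⟨u, hu, hvu⟩
  have hAN : ∀ t ∈ T.Nbhd A, T.high v < T.low t := fun t ht =>
    lt_low_of_mem_nbhd_reachLE ht
  have hAeq : A = S := by
    by_contra hne
    exact hS.2 A (hAS.ssubset_of_ne hne)
      (alwaysMin_of_high_lt_low_nbhd Relation.ReflTransGen.refl hAN)
  exact ⟨v, hAS Relation.ReflTransGen.refl, hAeq ▸ hAN⟩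

end ImpTerrain

/-- Every imprecise minimum contains a proxy; in fact any `s ∈ S` with
`high s < min_{t ∈ N(S)} low t` is a proxy of `S`. -/
theorem stmt3 {V : Type} [Fintype V] [DecidableEq V] (T : ImpTerrain V)
    (hle : ∀ v, T.low v ≤ T.high v) (S : Set V) (hS : T.ImpreciseMin S) :
    (∃ p, T.IsProxy S p) ∧
      ∀ s ∈ S, (∀ t ∈ T.Nbhd S, T.high s < T.low t) → T.IsProxy S s := by
  obtain ⟨p, hp, hpN⟩ := hS.exists_high_lt_low_nbhd hle
  exact ⟨⟨p, ImpTerrain.isProxy_of_high_lt_low_nbhd hp hpN⟩,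
    fun s hs hsN => ImpTerrain.isProxy_of_high_lt_low_nbhd hs hsN⟩
end
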